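/- Let n ≥ 1 and let u : ℝ → Mₙ be a continuously differentiable curve such that u(z) → A₊ as z → +∞ and u(z) → A₋ as z → −∞, where A₊ ∈ Oₙ⁺ and A₋ ∈ Oₙ⁻. If the function z ↦ (1/2)‖u'(z)‖² + F(u(z)) is integrable on ℝ, then ∫_ℝ ((1/2)‖u'(z)‖² + F(u(z))) dz ≥ 2√2/3. -/

import Mathlib

open MeasureTheory Filter Matrix

attribute [local instance] Matrix.frobeniusNormedAddCommGroup Matrix.frobeniusNormedSpace

open intervalIntegral
open scoped Convolution

section Aux

variable {n : ℕ}
local notation "Mat" => Matrix (Fin n) (Fin n) ℝ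
local notation "Ecl" => EuclideanSpace ℝ (Fin n)

lemma enorm_eq (v : Fin n → ℝ) :
    ‖(WithLp.equiv 2 (Fin n → ℝ)).symm v‖ = Real.sqrt (∑ j, v j ^ 2) := by
  rw [EuclideanSpace.norm_eq]; simp [Real.norm_eq_abs, sq_abs]

lemma frob_sq (C : Mat) : ‖C‖ ^ 2 = ∑ i, ∑ j, C i j ^ 2 := by
  rw [Matrix.frobenius_norm_def, ← Real.sqrt_eq_rpow, Real.sq_sqrt]
  · norm_num [Real.norm_eq_abs, sq_abs, Real.rpow_natCast]
  · positivity

/-- matrix acting on Euclidean space -/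
noncomputable def matT (A : Mat) (x : Ecl) : Ecl :=
  (WithLp.equiv 2 (Fin n → ℝ)).symm (A.mulVec ((WithLp.equiv 2 (Fin n → ℝ)) x))

lemma matT_norm_eq (A : Mat) (x : Ecl) :
    ‖matT A x‖ = Real.sqrt (∑ i, (A.mulVec ((WithLp.equiv 2 (Fin n → ℝ)) x) i) ^ 2) :=
  enorm_eq _

lemma cs_rows (C : Mat) (v : Fin n → ℝ) :
    ∑ i, (C.mulVec v i) ^ 2 ≤ ‖C‖ ^ 2 * ∑ j, v j ^ 2 := by
  rw [frob_sq, Finset.sum_mul]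
  refine Finset.sum_le_sum fun i _ => ?_
  simpa [Matrix.mulVec, dotProduct] using
    Finset.sum_mul_sq_le_sq_mul_sq Finset.univ (fun j => C i j) v

lemma matT_le (C : Mat) (x : Ecl) : ‖matT C x‖ ≤ ‖C‖ * ‖x‖ := by
  rw [matT_norm_eq]
  have h1 : ‖x‖ = Real.sqrt (∑ j, (((WithLp.equiv 2 (Fin n → ℝ)) x) j) ^ 2) := by
    simpa using enorm_eq ((WithLp.equiv 2 (Fin n → ℝ)) x)
  rw [h1, ← Real.sqrt_sq (norm_nonneg C), ← Real.sqrt_mul (by positivity)]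
  exact Real.sqrt_le_sqrt (by simpa using cs_rows C _)

lemma matT_sub (A B : Mat) (x : Ecl) : matT A x - matT B x = matT (A - B) x := by
  simp [matT, Matrix.sub_mulVec]
noncomputable def h0 (A : Mat) : ℝ :=
  sInf ((fun x : Ecl => ‖matT A x‖) '' Metric.sphere 0 1)

section h0facts
variable [Nonempty (Fin n)]

lemma sphere_ne : ((Metric.sphere 0 1 : Set Ecl)).Nonempty := by
  obtain ⟨i⟩ := (inferInstance : Nonempty (Fin n))
  refine ⟨EuclideanSpace.single i 1, ?_⟩
  simp [mem_sphere_iff_norm, EuclideanSpace.norm_single]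

lemma h0_bddBelow (A : Mat) :
    BddBelow ((fun x : Ecl => ‖matT A x‖) '' Metric.sphere 0 1) :=
  ⟨0, fun y ⟨x, _, hx⟩ => hx ▸ norm_nonneg _⟩

lemma h0_nonneg (A : Mat) : 0 ≤ h0 A :=
  le_csInf ((sphere_ne).image _) (fun y ⟨x, _, hx⟩ => hx ▸ norm_nonneg _)

lemma h0_le (A : Mat) {x : Ecl} (hx : ‖x‖ = 1) : h0 A ≤ ‖matT A x‖ :=
  csInf_le (h0_bddBelow A) ⟨x, by simpa [mem_sphere_iff_norm] using hx, rfl⟩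

lemma matT_cont (A : Mat) : Continuous fun x : Ecl => ‖matT A x‖ := by
  have : Continuous fun x : Ecl => matT A x := by
    exact LinearMap.continuous_of_finiteDimensional
      (((WithLp.linearEquiv 2 ℝ (Fin n → ℝ)).symm.toLinearMap.comp
        (Matrix.mulVecLin A)).comp (WithLp.linearEquiv 2 ℝ (Fin n → ℝ)).toLinearMap)
  exact this.norm
lemma h0_attained (A : Mat) : ∃ x : Ecl, ‖x‖ = 1 ∧ h0 A = ‖matT A x‖ := by
  obtain ⟨x, hxs, hmin⟩ := (isCompact_sphere (0:Ecl) 1).exists_isMinOn sphere_ne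
      ((matT_cont A).continuousOn)
  refine ⟨x, by simpa [mem_sphere_iff_norm] using hxs, le_antisymm (h0_le A (by simpa [mem_sphere_iff_norm] using hxs)) ?_⟩
  exact le_csInf (sphere_ne.image _) (fun y ⟨z, hz, hzy⟩ => hzy ▸ hmin hz)

end h0facts
section h0facts2
variable [Nonempty (Fin n)]

lemma h0_diff_le (A B : Mat) : |h0 A - h0 B| ≤ ‖A - B‖ := by
  have key : ∀ X Y : Mat, h0 X ≤ h0 Y + ‖X - Y‖ := by
    intro X Y
    obtain ⟨x, hx1, hx2⟩ := h0_attained Y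
    calc h0 X ≤ ‖matT X x‖ := h0_le X hx1
    _ ≤ ‖matT Y x‖ + ‖matT X x - matT Y x‖ := by
        have := norm_add_le (matT Y x) (matT X x - matT Y x); simpa using this
    _ ≤ h0 Y + ‖X - Y‖ := by
        rw [matT_sub, ← hx2]
        have := matT_le (X - Y) x
        rw [hx1, mul_one] at this
        linarith
  rw [abs_sub_le_iff]
  constructor
  · have := key A B; linarith
  · have := key B A; rw [norm_sub_rev] at this; linarith

lemma h0_orth {Q : Mat} (hQ : Q * Qᵀ = 1) : h0 Q = 1 := by
  have hQ' : Qᵀ * Q = 1 := mul_eq_one_comm.mp hQ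
  have huni : ∀ x : Ecl, ‖x‖ = 1 → ‖matT Q x‖ = 1 := by
    intro x hx
    set v := (WithLp.equiv 2 (Fin n → ℝ)) x with hv
    have hsum : ∑ j, v j ^ 2 = 1 := by
      have := enorm_eq v
      simp only [hv, Equiv.symm_apply_apply] at this
      rw [this] at hx
      nlinarith [Real.sq_sqrt (by positivity : (0:ℝ) ≤ ∑ j, v j ^2), Real.sqrt_nonneg (∑ j, v j ^2)]
    have hdot : ∑ i, (Q.mulVec v i) ^ 2 = ∑ j, v j ^ 2 := by
      have e1 : ∑ i, (Q.mulVec v i) ^ 2 = (Q.mulVec v) ⬝ᵥ (Q.mulVec v) := by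
        simp [dotProduct, sq]
      have e2 : (Q.mulVec v) ⬝ᵥ (Q.mulVec v) = ((Qᵀ * Q).mulVec v) ⬝ᵥ v := by
        rw [Matrix.dotProduct_mulVec, ← Matrix.mulVec_transpose, Matrix.mulVec_mulVec]
      rw [e1, e2, hQ', Matrix.one_mulVec]
      simp [dotProduct, sq]
    rw [matT_norm_eq, ← hv, hdot, hsum, Real.sqrt_one]
  have himg : (fun x : Ecl => ‖matT Q x‖) '' Metric.sphere 0 1 = {1} := by
    apply Set.eq_singleton_iff_nonempty_unique_mem.mpr
    exact ⟨(sphere_ne).image _, fun y ⟨x, hx, hxy⟩ => hxy ▸ huni x (by simpa [mem_sphere_iff_norm] using hx)⟩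
  rw [h0, himg, csInf_singleton]

lemma h0_det_zero {C : Mat} (hC : C.det = 0) : h0 C = 0 := by
  obtain ⟨v, hv0, hvC⟩ := (Matrix.exists_mulVec_eq_zero_iff).mpr hC
  have hpos : 0 < ∑ j, v j ^ 2 := by
    rcases Function.ne_iff.mp hv0 with ⟨j, hj⟩
    have : (0:ℝ) < v j ^ 2 := by
      have h := abs_pos.mpr hj
      nlinarith [sq_abs (v j)]
    exact Finset.sum_pos' (fun i _ => by positivity) ⟨j, Finset.mem_univ j, this⟩
  set c : ℝ := (Real.sqrt (∑ j, v j ^ 2))⁻¹ with hc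
  have hcpos : 0 < c := by
    rw [hc]; exact inv_pos.mpr (Real.sqrt_pos.mpr hpos)
  set x : Ecl := (WithLp.equiv 2 (Fin n → ℝ)).symm (c • v) with hx
  have hxnorm : ‖x‖ = 1 := by
    rw [hx, enorm_eq]
    have : ∑ j, (c • v) j ^ 2 = c^2 * ∑ j, v j ^ 2 := by
      simp [Finset.mul_sum, mul_pow]
    rw [this, Real.sqrt_mul (by positivity), Real.sqrt_sq hcpos.le, hc]
    rw [inv_mul_cancel₀ (Real.sqrt_pos.mpr hpos).ne']
  have hzero : matT C x = 0 := by
    rw [matT, hx]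
    simp only [Equiv.apply_symm_apply]
    rw [Matrix.mulVec_smul, hvC]
    simp
  have h1 := h0_le C hxnorm
  rw [hzero, norm_zero] at h1
  exact le_antisymm h1 (h0_nonneg C)

lemma h0_pot (A : Mat) : 1 - h0 A ^ 2 ≤ ‖Aᵀ * A - 1‖ := by
  obtain ⟨x, hx1, hx2⟩ := h0_attained A
  set v := (WithLp.equiv 2 (Fin n → ℝ)) x with hv
  have hsum : ∑ j, v j ^ 2 = 1 := by
    have := enorm_eq v
    simp only [hv, Equiv.symm_apply_apply] at this
    rw [this] at hx1
    nlinarith [Real.sq_sqrt (by positivity : (0:ℝ) ≤ ∑ j, v j ^2), Real.sqrt_nonneg (∑ j, v j ^2)]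
  have hAv : h0 A ^ 2 = ∑ i, (A.mulVec v i) ^ 2 := by
    rw [hx2, matT_norm_eq, ← hv, Real.sq_sqrt (by positivity)]
  set C : Mat := 1 - Aᵀ * A with hCdef
  have e2 : (A.mulVec v) ⬝ᵥ (A.mulVec v) = ((Aᵀ * A).mulVec v) ⬝ᵥ v := by
    rw [Matrix.dotProduct_mulVec, ← Matrix.mulVec_transpose, Matrix.mulVec_mulVec]
  have key : 1 - h0 A ^ 2 = (C.mulVec v) ⬝ᵥ v := by
    rw [hCdef, Matrix.sub_mulVec, sub_dotProduct, Matrix.one_mulVec, hAv]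
    have : v ⬝ᵥ v = ∑ j, v j ^ 2 := by simp [dotProduct, sq]
    rw [this, hsum, ← e2]
    simp [dotProduct, sq]
  have cs : ((C.mulVec v) ⬝ᵥ v) ^ 2 ≤ ‖C‖ ^ 2 := by
    have h1 : ((C.mulVec v) ⬝ᵥ v) ^ 2 ≤ (∑ i, (C.mulVec v i) ^ 2) * ∑ j, v j ^ 2 := by
      simpa [dotProduct] using
        Finset.sum_mul_sq_le_sq_mul_sq Finset.univ (fun i => C.mulVec v i) v
    have h2 := cs_rows C v
    rw [hsum, mul_one] at h1
    rw [hsum, mul_one] at h2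
    exact h1.trans h2
  have : (C.mulVec v) ⬝ᵥ v ≤ ‖C‖ := by
    nlinarith [norm_nonneg C, abs_nonneg ((C.mulVec v) ⬝ᵥ v), sq_abs ((C.mulVec v) ⬝ᵥ v), le_abs_self ((C.mulVec v) ⬝ᵥ v)]
  rw [key, hCdef]
  calc (1 - Aᵀ * A).mulVec v ⬝ᵥ v ≤ ‖(1:Mat) - Aᵀ * A‖ := by rw [← hCdef]; exact this
  _ = ‖Aᵀ * A - 1‖ := norm_sub_rev _ _

end h0facts2
lemma frob_trace (C : Mat) : ‖C‖ ^ 2 = Matrix.trace (Cᵀ * C) := by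
  rw [frob_sq, Matrix.trace]
  simp only [Matrix.diag_apply, Matrix.mul_apply, Matrix.transpose_apply]
  rw [Finset.sum_comm]
  congr 1; ext i; congr 1; ext j; ring

lemma frob_transpose_id (A : Mat) : ‖Aᵀ * A - 1‖ = ‖A * Aᵀ - 1‖ := by
  have t1 : Matrix.trace (Aᵀ * A) = Matrix.trace (A * Aᵀ) := Matrix.trace_mul_comm _ _
  have t2 : Matrix.trace ((Aᵀ * A) * (Aᵀ * A)) = Matrix.trace ((A * Aᵀ) * (A * Aᵀ)) := by
    calc Matrix.trace ((Aᵀ * A) * (Aᵀ * A)) = Matrix.trace ((Aᵀ * (A * Aᵀ)) * A) := by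
          rw [mul_assoc, mul_assoc, mul_assoc]
    _ = Matrix.trace (A * (Aᵀ * (A * Aᵀ))) := Matrix.trace_mul_comm _ _
    _ = Matrix.trace ((A * Aᵀ) * (A * Aᵀ)) := by rw [mul_assoc]
  have sq_eq : ‖Aᵀ * A - 1‖ ^ 2 = ‖A * Aᵀ - 1‖ ^ 2 := by
    rw [frob_trace, frob_trace]
    have e1 : (Aᵀ * A - 1 : Mat)ᵀ = Aᵀ * A - 1 := by
      simp [Matrix.transpose_sub, Matrix.transpose_mul]
    have e2 : (A * Aᵀ - 1 : Mat)ᵀ = A * Aᵀ - 1 := by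
      simp [Matrix.transpose_sub, Matrix.transpose_mul]
    rw [e1, e2]
    simp only [Matrix.sub_mul, Matrix.mul_sub, Matrix.mul_one, Matrix.one_mul,
      Matrix.trace_sub]
    rw [t1, t2]
  have h1 := norm_nonneg (Aᵀ * A - 1 : Mat)
  have h2 := norm_nonneg (A * Aᵀ - 1 : Mat)
  nlinarith

noncomputable def hsgn (A : Mat) : ℝ := if A.det < 0 then -h0 A else h0 A

noncomputable def gcl (A : Mat) : ℝ := max (-2) (min (hsgn A) 2)

section sgnfacts
variable [Nonempty (Fin n)]

lemma hsgn_sq (A : Mat) : hsgn A ^ 2 = h0 A ^ 2 := by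
  rw [hsgn]; split <;> ring

lemma hsgn_diff_le (A B : Mat) : |hsgn A - hsgn B| ≤ ‖A - B‖ := by
  have key : ∀ X Y : Mat, X.det < 0 → 0 ≤ Y.det → h0 X + h0 Y ≤ ‖X - Y‖ := by
    intro X Y hX hY
    have hcont : Continuous fun t : ℝ => (X + t • (Y - X)).det := by
      exact Continuous.matrix_det (by continuity)
    have h0lt : (X + (0:ℝ) • (Y - X)).det < 0 := by simpa using hX
    have h1ge : 0 ≤ (X + (1:ℝ) • (Y - X)).det := by simpa using hY
    obtain ⟨t, ht01, ht0⟩ : ∃ t ∈ Set.Icc (0:ℝ) 1, (X + t • (Y - X)).det = 0 := by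
      have := intermediate_value_Icc (zero_le_one (α := ℝ)) (hcont.continuousOn)
      have h0mem : (0:ℝ) ∈ Set.Icc ((X + (0:ℝ) • (Y - X)).det) ((X + (1:ℝ) • (Y - X)).det) :=
        ⟨h0lt.le, h1ge⟩
      obtain ⟨t, ht, htt⟩ := this h0mem
      exact ⟨t, ht, htt⟩
    set C : Mat := X + t • (Y - X) with hC
    have hc0 : h0 C = 0 := h0_det_zero ht0
    have hXC : X - C = -(t • (Y - X)) := by rw [hC]; abel
    have hYC : Y - C = (1 - t) • (Y - X) := by rw [hC, sub_smul, one_smul]; abel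
    have d1 : h0 X ≤ t * ‖Y - X‖ := by
      have h := h0_diff_le X C
      rw [hc0, sub_zero, abs_of_nonneg (h0_nonneg X)] at h
      calc h0 X ≤ ‖X - C‖ := h
      _ = t * ‖Y - X‖ := by
          rw [hXC, norm_neg, norm_smul, Real.norm_eq_abs, abs_of_nonneg ht01.1]
    have d2 : h0 Y ≤ (1 - t) * ‖Y - X‖ := by
      have h := h0_diff_le Y C
      rw [hc0, sub_zero, abs_of_nonneg (h0_nonneg Y)] at h
      calc h0 Y ≤ ‖Y - C‖ := h
      _ = (1 - t) * ‖Y - X‖ := by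
          rw [hYC, norm_smul, Real.norm_eq_abs, abs_of_nonneg (by linarith [ht01.2] : (0:ℝ) ≤ 1 - t)]
    have : h0 X + h0 Y ≤ ‖Y - X‖ := by nlinarith [norm_nonneg (Y - X : Mat)]
    rwa [norm_sub_rev] at this
  rcases lt_or_ge A.det 0 with hA | hA <;> rcases lt_or_ge B.det 0 with hB | hB
  · rw [hsgn, hsgn, if_pos hA, if_pos hB]
    rw [show -h0 A - -h0 B = -(h0 A - h0 B) by ring, abs_neg]
    exact h0_diff_le A B
  · rw [hsgn, hsgn, if_pos hA, if_neg (not_lt.mpr hB)]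
    rw [show -h0 A - h0 B = -(h0 A + h0 B) by ring, abs_neg,
      abs_of_nonneg (by linarith [h0_nonneg A, h0_nonneg B])]
    exact key A B hA hB
  · rw [hsgn, hsgn, if_neg (not_lt.mpr hA), if_pos hB]
    rw [abs_of_nonneg (by linarith [h0_nonneg A, h0_nonneg B]), norm_sub_rev]
    have := key B A hB hA
    linarith
  · rw [hsgn, hsgn, if_neg (not_lt.mpr hA), if_neg (not_lt.mpr hB)]
    exact h0_diff_le A B

lemma gcl_diff_le (A B : Mat) : |gcl A - gcl B| ≤ ‖A - B‖ := by
  have h1 : |gcl A - gcl B| ≤ |min (hsgn A) 2 - min (hsgn B) 2| := by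
    rw [gcl, gcl, max_comm (-2) _, max_comm (-2) _]
    exact abs_max_sub_max_le_abs _ _ _
  have h2 : |min (hsgn A) 2 - min (hsgn B) 2| ≤ |hsgn A - hsgn B| := by
    have := abs_min_sub_min_le_max (hsgn A) 2 (hsgn B) 2
    simpa using this
  exact h1.trans (h2.trans (hsgn_diff_le A B))

lemma gcl_lipschitz : LipschitzWith 1 (gcl (n := n)) := by
  refine LipschitzWith.of_dist_le_mul fun A B => ?_
  simpa [Real.dist_eq, dist_eq_norm] using gcl_diff_le A B

lemma gcl_abs_le (A : Mat) : |gcl A| ≤ 2 := by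
  rw [abs_le, gcl]
  constructor
  · exact le_max_left _ _
  · exact max_le (by norm_num) (min_le_right _ _)

lemma gcl_orth_pos {Q : Mat} (hQ : Q * Qᵀ = 1) (hdet : Q.det = 1) : gcl Q = 1 := by
  rw [gcl, hsgn, if_neg (by rw [hdet]; norm_num), h0_orth hQ]
  norm_num

lemma gcl_orth_neg {Q : Mat} (hQ : Q * Qᵀ = 1) (hdet : Q.det = -1) : gcl Q = -1 := by
  rw [gcl, hsgn, if_pos (by rw [hdet]; norm_num), h0_orth hQ]
  norm_num

lemma gcl_pot (A : Mat) : 1 - gcl A ^ 2 ≤ ‖A * Aᵀ - 1‖ := by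
  rcases le_or_gt (hsgn A) (-2) with hs | hs
  · have : gcl A = -2 := by
      rw [gcl, min_eq_left (by linarith), max_eq_left hs]
    rw [this]
    have := norm_nonneg (A * Aᵀ - 1 : Mat); nlinarith
  rcases le_or_gt 2 (hsgn A) with hs2 | hs2
  · have : gcl A = 2 := by
      rw [gcl, min_eq_right hs2, max_eq_right (by norm_num)]
    rw [this]
    have := norm_nonneg (A * Aᵀ - 1 : Mat); nlinarith
  · have : gcl A = hsgn A := by
      rw [gcl, min_eq_left hs2.le, max_eq_right hs.le]
    rw [this, hsgn_sq, ← frob_transpose_id]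
    exact h0_pot A

end sgnfacts

noncomputable def mtoE : Matrix (Fin n) (Fin n) ℝ ≃ₗᵢ[ℝ] PiLp 2 (fun _ : Fin n => PiLp 2 (fun _ : Fin n => ℝ)) where
  toLinearEquiv :=
  { toFun := fun A => WithLp.toLp 2 (fun i => WithLp.toLp 2 (A i))
    invFun := fun x => fun i j => x i j
    map_add' := fun _ _ => rfl
    map_smul' := fun _ _ => rfl
    left_inv := fun _ => rfl
    right_inv := fun _ => rfl }
  norm_map' := fun A => by
    show ‖WithLp.toLp 2 (fun i => WithLp.toLp 2 (A i))‖ = ‖A‖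
    rw [Matrix.frobenius_norm_def, PiLp.norm_eq_of_L2, ← Real.sqrt_eq_rpow]
    congr 1; refine Finset.sum_congr rfl fun i _ => ?_
    rw [PiLp.norm_eq_of_L2, Real.sq_sqrt (by positivity)]
    simp

open MeasureTheory Filter
open scoped Convolution

lemma smooth_approx {E : Type*} [NormedAddCommGroup E] [InnerProductSpace ℝ E]
    [FiniteDimensional ℝ E] (g : E → ℝ) (hg : LipschitzWith 1 g) (hgb : ∀ x, |g x| ≤ 2)
    {ε : ℝ} (hε : 0 < ε) :
    ∃ G : E → ℝ, ContDiff ℝ 1 G ∧ LipschitzWith 1 G ∧ ∀ x, |G x - g x| ≤ ε := by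
  borelize E
  set μ : Measure E := (Module.finBasis ℝ E).addHaar with hμ
  haveI : μ.Regular := by rw [hμ]; infer_instance
  set φ : ContDiffBump (0 : E) := ⟨ε/2, ε, by positivity, by linarith⟩ with hφ
  have gcont : Continuous g := hg.continuous
  set G : E → ℝ := (φ.normed μ) ⋆[ContinuousLinearMap.lsmul ℝ ℝ, μ] g with hG
  have hint : ∀ x : E, Integrable (fun t => g (x - t) * φ.normed μ t) μ := by
    intro x
    exact (φ.integrable_normed).bdd_mul
      ((gcont.comp (continuous_const.sub continuous_id)).aestronglyMeasurable)
      (Eventually.of_forall fun t => (by simpa [Real.norm_eq_abs] using hgb (x - t) : ‖g (x - t)‖ ≤ 2))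
  have hGval : ∀ x : E, G x = ∫ t, g (x - t) * φ.normed μ t ∂μ := by
    intro x
    rw [hG, convolution_def]
    congr 1; ext t
    simp [mul_comm]
  refine ⟨G, ?_, ?_, ?_⟩
  · exact (φ.hasCompactSupport_normed).contDiff_convolution_left _
      (φ.contDiff_normed) (gcont.locallyIntegrable)
  · refine LipschitzWith.of_dist_le_mul fun x y => ?_
    rw [Real.dist_eq, NNReal.coe_one, one_mul, hGval, hGval, ← integral_sub (hint x) (hint y)]
    have step : ∀ t : E, |g (x - t) * φ.normed μ t - g (y - t) * φ.normed μ t|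
        ≤ dist x y * φ.normed μ t := by
      intro t
      rw [← sub_mul, abs_mul, abs_of_nonneg (φ.nonneg_normed t)]
      refine mul_le_mul_of_nonneg_right ?_ (φ.nonneg_normed t)
      have h := hg.dist_le_mul (x - t) (y - t)
      rw [NNReal.coe_one, one_mul] at h
      have heq : dist (x - t) (y - t) = dist x y := by
        rw [dist_eq_norm, dist_eq_norm]; congr 1; abel
      rw [Real.dist_eq, heq] at h
      exact h
    calc |∫ t, (g (x - t) * φ.normed μ t - g (y - t) * φ.normed μ t) ∂μ|
        ≤ ∫ t, |g (x - t) * φ.normed μ t - g (y - t) * φ.normed μ t| ∂μ :=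
          by simpa [Real.norm_eq_abs] using
            norm_integral_le_integral_norm (μ := μ)
              (f := fun t => g (x - t) * φ.normed μ t - g (y - t) * φ.normed μ t)
      _ ≤ ∫ t, dist x y * φ.normed μ t ∂μ := by
          refine integral_mono ((hint x).sub (hint y)).abs ?_ step
          exact (φ.integrable_normed).const_mul _
      _ = dist x y := by
          rw [MeasureTheory.integral_const_mul, φ.integral_normed, mul_one]
  · intro x
    have : dist (G x) (g x) ≤ ε := by
      refine ContDiffBump.dist_normed_convolution_le gcont.aestronglyMeasurable ?_
      intro y hy
      have := hg.dist_le_mul y x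
      rw [NNReal.coe_one, one_mul] at this
      exact this.trans (le_of_lt (by simpa [hφ] using Metric.mem_ball.mp hy))
    simpa [Real.dist_eq] using this

open MeasureTheory Filter intervalIntegral

noncomputable def qf (δ s : ℝ) : ℝ := max (1 - s^2 - δ) 0

lemma qf_cont (δ : ℝ) : Continuous (qf δ) := by
  unfold qf; fun_prop

lemma qf_nonneg (δ s : ℝ) : 0 ≤ qf δ s := le_max_right _ _

noncomputable def Qf (δ t : ℝ) : ℝ := ∫ s in (0:ℝ)..t, qf δ s

lemma Qf_hasDeriv (δ t : ℝ) : HasDerivAt (Qf δ) (qf δ t) t :=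
  ((qf_cont δ).integral_hasStrictDerivAt 0 t).hasDerivAt

lemma Qf_cont (δ : ℝ) : Continuous (Qf δ) := by
  have : Differentiable ℝ (Qf δ) := fun t => (Qf_hasDeriv δ t).differentiableAt
  exact this.continuous

lemma Qf_rep (δ a b : ℝ) : Qf δ b - Qf δ a = ∫ s in a..b, qf δ s := by
  have h := integral_add_adjacent_intervals
    ((qf_cont δ).intervalIntegrable (μ := volume) 0 a) ((qf_cont δ).intervalIntegrable (μ := volume) a b)
  rw [Qf, Qf]; linarith [h]

lemma Qf_mono (δ : ℝ) {a b : ℝ} (hab : a ≤ b) : Qf δ a ≤ Qf δ b := by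
  have h := Qf_rep δ a b
  have h2 : 0 ≤ ∫ s in a..b, qf δ s :=
    integral_nonneg hab (fun s _ => qf_nonneg δ s)
  linarith

lemma Qf_lower {ε : ℝ} (hε : 0 < ε) (hε1 : ε ≤ 1) :
    4/3 - 14*ε ≤ Qf (6*ε) (1-ε) - Qf (6*ε) (-(1-ε)) := by
  rw [Qf_rep]
  set a : ℝ := -(1-ε); set b : ℝ := 1-ε
  have hab : a ≤ b := by simp only [a, b]; linarith
  have hlow : ∫ s in a..b, (1 - s^2 - 6*ε) ≤ ∫ s in a..b, qf (6*ε) s := by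
    refine integral_mono_on hab ?_ ((qf_cont _).intervalIntegrable a b) ?_
    · exact (by fun_prop : Continuous fun s : ℝ => 1 - s^2 - 6*ε).intervalIntegrable a b
    · exact fun s _ => le_max_left _ _
  have hcomp : ∫ s in a..b, (1 - s^2 - 6*ε) = (1 - 6*ε)*(b-a) - (b^3 - a^3)/3 := by
    have h1 : ∫ s in a..b, (1 - s^2 - 6*ε)
        = (∫ s in a..b, (1 - 6*ε : ℝ)) - ∫ s in a..b, s^2 := by
      rw [← integral_sub (intervalIntegrable_const) ((continuous_pow 2).intervalIntegrable a b)]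
      congr 1; ext s; ring
    rw [h1, intervalIntegral.integral_const, integral_pow]
    norm_num [smul_eq_mul]; ring
  have : (1 - 6*ε)*(b-a) - (b^3 - a^3)/3 ≥ 4/3 - 14*ε := by
    simp only [a, b]; nlinarith [sq_nonneg ε, sq_nonneg (1-ε), hε.le]
  linarith

end Aux

/-- The Saint Venant–Kirchhoff potential `F(A) = (1/4)‖AAᵀ − I‖²` with the Frobenius norm. -/
noncomputable def potF {n : ℕ} (A : Matrix (Fin n) (Fin n) ℝ) : ℝ :=
  (1 / 4) * ‖A * Aᵀ - 1‖ ^ 2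

theorem stmt0 {n : ℕ} (hn : 1 ≤ n) (u : ℝ → Matrix (Fin n) (Fin n) ℝ)
    (hu : ContDiff ℝ 1 u)
    (Aplus Aminus : Matrix (Fin n) (Fin n) ℝ)
    (hAp : Aplus * Aplusᵀ = 1) (hApdet : Aplus.det = 1)
    (hAm : Aminus * Aminusᵀ = 1) (hAmdet : Aminus.det = -1)
    (hlimp : Tendsto u atTop (nhds Aplus))
    (hlimm : Tendsto u atBot (nhds Aminus))
    (hint : Integrable (fun z => (1 / 2) * ‖deriv u z‖ ^ 2 + potF (u z))) :
    2 * Real.sqrt 2 / 3 ≤ ∫ z : ℝ, ((1 / 2) * ‖deriv u z‖ ^ 2 + potF (u z)) := by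
  haveI : Nonempty (Fin n) := ⟨⟨0, hn⟩⟩
  set e : ℝ → ℝ := fun z => (1 / 2) * ‖deriv u z‖ ^ 2 + potF (u z) with he
  set K : ℝ := ∫ z : ℝ, e z with hK
  have he_nonneg : ∀ z, 0 ≤ e z := by
    intro z
    have h1 : (0:ℝ) ≤ potF (u z) := by rw [potF]; positivity
    have h2 : (0:ℝ) ≤ (1/2) * ‖deriv u z‖ ^ 2 := by positivity
    simp only [he]; linarith
  -- it suffices to prove the epsilon-family of bounds
  suffices hmain : ∀ ε : ℝ, 0 < ε → ε ≤ 1 → 4/3 - 14*ε ≤ Real.sqrt 2 * K by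
    have hs2 : Real.sqrt 2 ^ 2 = 2 := Real.sq_sqrt (by norm_num)
    have hs2pos : 0 < Real.sqrt 2 := Real.sqrt_pos.mpr (by norm_num)
    by_contra hcon
    push_neg at hcon
    have hK4 : Real.sqrt 2 * K < 4/3 := by nlinarith
    set c : ℝ := 4/3 - Real.sqrt 2 * K with hc
    have hcpos : 0 < c := by rw [hc]; linarith
    have h1 := hmain (min 1 (c/28)) (lt_min one_pos (by positivity)) (min_le_left _ _)
    have h2 : min 1 (c/28) ≤ c/28 := min_le_right _ _
    linarith
  intro ε hεpos hε1
  haveI : FiniteDimensional ℝ (PiLp 2 (fun _ : Fin n => PiLp 2 (fun _ : Fin n => ℝ))) :=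
    Module.Finite.equiv (mtoE (n := n)).toLinearEquiv
  -- smooth approximation of gcl
  obtain ⟨G, hGsmooth, hGlip, hGapprox⟩ :=
    smooth_approx (E := PiLp 2 (fun _ : Fin n => PiLp 2 (fun _ : Fin n => ℝ)))
      (fun x => gcl ((mtoE (n := n)).symm x))
      (by exact (gcl_lipschitz.comp (mtoE (n := n)).symm.lipschitz).weaken (by norm_num))
      (fun x => gcl_abs_le _) hεpos
  set H : Matrix (Fin n) (Fin n) ℝ → ℝ := fun A => G (mtoE A) with hH
  have hHsmooth : ContDiff ℝ 1 H := by
    exact hGsmooth.comp ((mtoE (n := n)).toContinuousLinearEquiv.toContinuousLinearMap.contDiff)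
  have hHlip : LipschitzWith 1 H := by
    exact (hGlip.comp (mtoE (n := n)).lipschitz).weaken (by norm_num)
  have hHapprox : ∀ A, |H A - gcl A| ≤ ε := by
    intro A
    have := hGapprox (mtoE A)
    simpa using this
  have hHcont : Continuous H := hHlip.continuous
  set δ : ℝ := 6*ε with hδ
  -- pointwise potential bound
  have hqH : ∀ A : Matrix (Fin n) (Fin n) ℝ, qf δ (H A) ≤ ‖A * Aᵀ - 1‖ := by
    intro A
    refine max_le ?_ (norm_nonneg _)
    have h1 := gcl_pot A
    have h2 := abs_le.mp (hHapprox A)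
    have h3 := abs_le.mp (gcl_abs_le A)
    nlinarith [sq_nonneg (H A - gcl A)]
  -- derivative of z ↦ H (u z)
  have huD : ∀ z, HasDerivAt u (deriv u z) z := fun z =>
    ((hu.differentiable one_ne_zero) z).hasDerivAt
  set D : ℝ → ℝ := fun z => (fderiv ℝ H (u z)) (deriv u z) with hD
  have hHuD : ∀ z, HasDerivAt (fun z => H (u z)) (D z) z := by
    intro z
    exact (((hHsmooth.differentiable one_ne_zero) (u z)).hasFDerivAt).comp_hasDerivAt z (huD z)
  have hDbound : ∀ z, |D z| ≤ ‖deriv u z‖ := by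
    intro z
    have hf : HasFDerivAt H (fderiv ℝ H (u z)) (u z) :=
      ((hHsmooth.differentiable one_ne_zero) (u z)).hasFDerivAt
    have hl : HasDerivAt (fun t : ℝ => u z + t • deriv u z) (deriv u z) 0 := by
      have h := ((hasDerivAt_id' (0:ℝ)).smul_const (deriv u z)).const_add (u z)
      rwa [one_smul] at h
    have hc : HasDerivAt (fun t : ℝ => H (u z + t • deriv u z)) (D z) 0 :=
      hf.comp_hasDerivAt_of_eq (0:ℝ) hl (by simp)
    have hlipL : LipschitzWith ‖deriv u z‖₊ (fun t : ℝ => H (u z + t • deriv u z)) := by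
      refine LipschitzWith.of_dist_le_mul fun s t => ?_
      calc dist (H (u z + s • deriv u z)) (H (u z + t • deriv u z))
          ≤ dist (u z + s • deriv u z) (u z + t • deriv u z) := by
            simpa using hHlip.dist_le_mul (u z + s • deriv u z) (u z + t • deriv u z)
      _ = ‖deriv u z‖₊ * dist s t := by
            rw [dist_eq_norm, add_sub_add_left_eq_sub, ← sub_smul, norm_smul, Real.dist_eq,
              Real.norm_eq_abs, coe_nnnorm, mul_comm]
    have := norm_deriv_le_of_lipschitz (x₀ := (0:ℝ)) hlipL
    rw [hc.deriv] at this
    simpa [Real.norm_eq_abs] using this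
  -- function m and its derivative
  set m : ℝ → ℝ := fun z => Qf δ (H (u z)) with hm
  set m' : ℝ → ℝ := fun z => qf δ (H (u z)) * D z with hm'
  have hmD : ∀ z, HasDerivAt m (m' z) z := by
    intro z
    exact (Qf_hasDeriv δ (H (u z))).comp z (hHuD z)
  -- pointwise energy bound
  have hm'_le : ∀ z, m' z ≤ Real.sqrt 2 * e z := by
    intro z
    set a : ℝ := ‖deriv u z‖
    set w : ℝ := ‖u z * (u z)ᵀ - 1‖
    have hq1 : qf δ (H (u z)) ≤ w := hqH (u z)
    have hq0 : 0 ≤ qf δ (H (u z)) := qf_nonneg _ _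
    have hDa := hDbound z
    have haw : qf δ (H (u z)) * D z ≤ w * a := by
      calc qf δ (H (u z)) * D z ≤ qf δ (H (u z)) * |D z| :=
            mul_le_mul_of_nonneg_left (le_abs_self _) hq0
      _ ≤ w * a := mul_le_mul hq1 hDa (abs_nonneg _) (norm_nonneg _)
    have hee : e z = (1/2) * a^2 + (1/4) * w^2 := by
      simp only [he, potF, a, w]
    have hamgm : w * a ≤ Real.sqrt 2 * ((1/2) * a^2 + (1/4) * w^2) := by
      have hs2 : Real.sqrt 2 ^ 2 = 2 := Real.sq_sqrt (by norm_num)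
      have hspos : 0 < Real.sqrt 2 := Real.sqrt_pos.mpr (by norm_num)
      nlinarith [sq_nonneg (Real.sqrt 2 * a - w), sq_nonneg a, sq_nonneg w]
    simp only [hm']
    rw [hee]
    linarith
  -- continuity of m'
  have hm'cont : Continuous m' := by
    have h1 : Continuous fun z => qf δ (H (u z)) :=
      (qf_cont δ).comp (hHcont.comp hu.continuous)
    have h2 : Continuous D := by
      have hfd : Continuous fun z => fderiv ℝ H (u z) :=
        (hHsmooth.continuous_fderiv one_ne_zero).comp hu.continuous
      exact hfd.clm_apply (hu.continuous_deriv le_rfl)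
    exact h1.mul h2
  -- FTC estimate on intervals
  have hstep : ∀ a b : ℝ, a ≤ b → m b - m a ≤ Real.sqrt 2 * K := by
    intro a b hab
    have hftc : ∫ z in a..b, m' z = m b - m a :=
      intervalIntegral.integral_eq_sub_of_hasDerivAt (fun t _ => hmD t)
        (hm'cont.intervalIntegrable a b)
    have hintsqe : Integrable (fun z => Real.sqrt 2 * e z) := hint.const_mul _
    have hmono : ∫ z in a..b, m' z ≤ ∫ z in a..b, Real.sqrt 2 * e z := by
      refine intervalIntegral.integral_mono_on hab (hm'cont.intervalIntegrable a b)
        (hintsqe.intervalIntegrable) (fun x _ => hm'_le x)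
    have htail : ∫ z in a..b, Real.sqrt 2 * e z ≤ Real.sqrt 2 * K := by
      rw [intervalIntegral.integral_of_le hab]
      have h1 : ∫ z in Set.Ioc a b, Real.sqrt 2 * e z ≤ ∫ z, Real.sqrt 2 * e z := by
        refine setIntegral_le_integral hintsqe ?_
        exact Eventually.of_forall fun z => mul_nonneg (Real.sqrt_nonneg 2) (he_nonneg z)
      have h2 : ∫ z, Real.sqrt 2 * e z = Real.sqrt 2 * K := by
        rw [hK]; exact MeasureTheory.integral_const_mul _ _
      linarith
    linarith
  -- limits at infinity
  set S : ℝ := Qf δ (H Aplus) with hS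
  set T : ℝ := Qf δ (H Aminus) with hT
  have hmtop : Tendsto m atTop (nhds S) :=
    ((Qf_cont δ).tendsto _).comp ((hHcont.tendsto _).comp hlimp)
  have hmbot : Tendsto m atBot (nhds T) :=
    ((Qf_cont δ).tendsto _).comp ((hHcont.tendsto _).comp hlimm)
  have hSa : ∀ a : ℝ, S - Real.sqrt 2 * K ≤ m a := by
    intro a
    have h1 : Tendsto (fun b => m b - m a) atTop (nhds (S - m a)) :=
      hmtop.sub_const (m a)
    have h2 : S - m a ≤ Real.sqrt 2 * K := by
      refine le_of_tendsto h1 ?_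
      filter_upwards [eventually_ge_atTop a] with b hb
      exact hstep a b hb
    linarith
  have hST : S - Real.sqrt 2 * K ≤ T :=
    ge_of_tendsto hmbot (Eventually.of_forall hSa)
  -- boundary values
  have hSlow : Qf δ (1 - ε) ≤ S := by
    refine Qf_mono δ ?_
    have h1 := abs_le.mp (hHapprox Aplus)
    rw [gcl_orth_pos hAp hApdet] at h1
    linarith [h1.1]
  have hThigh : T ≤ Qf δ (-(1 - ε)) := by
    refine Qf_mono δ ?_
    have h1 := abs_le.mp (hHapprox Aminus)
    rw [gcl_orth_neg hAm hAmdet] at h1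
    linarith [h1.2]
  have hQlow := Qf_lower hεpos hε1
  rw [← hδ] at hQlow
  linarith
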